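/- Let B ∈ R_{++}^m, integers 1 ≤ τ₁ ≤ τ₂, α ∈ [0,1], prediction T_P ∈ [τ₁, τ₂]. Define λ_t = α/(1+ln(τ₂/τ₁))·ρ_{max(t,τ₁)} + (1−α)·ρ_{T_P}·1{t ≤ T_P}, where ρ_t = B/t (componentwise). Then (i) ∑_{t=1}^{τ₂} λ_t ≤ B, (ii) for all T ∈ [τ₁, τ₂], (1/T)∑_{t=1}^T min{min_j λ_{t,j}/ρ_{T,j}, 1} ≥ α/(1+ln(τ₂/τ₁)), and (iii) for T = T_P this quantity is at least 1 − α + α/(1+ln(τ₂/τ₁)). -/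

import Mathlib

/-!
The `α`-part of `λ` is the constant rate `ρ_{τ₁}` up to `τ₁` and then `ρ_t`, so its total is
`B (1 + ∑_{τ₁ < t ≤ τ₂} 1/t) ≤ B (1 + ln(τ₂/τ₁))`; scaled by `α/(1 + ln(τ₂/τ₁))` it spends at
most `α B`, while the prediction part spends exactly `(1 - α) B`. For `τ₁ ≤ T` and `t ≤ T` we
have `ρ_{max(t,τ₁)} ≥ ρ_T`, so every ratio `λ_{t,j}/ρ_{T,j}` is at least `α/(1 + ln(τ₂/τ₁))`;
at `T = T_P` the prediction part adds `1 - α` to each of these ratios.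
-/

open Finset

lemma sum_Ioc_one_div_le_log {a b : ℕ} (ha : 1 ≤ a) (hab : a ≤ b) :
    ∑ t ∈ Ioc a b, (1 : ℝ) / t ≤ Real.log ((b : ℝ) / a) := by
  have ha0 : (0 : ℝ) < a := by exact_mod_cast ha
  induction b, hab using Nat.le_induction with
  | base => simp [div_self ha0.ne']
  | succ n han ih =>
    have hn : (0 : ℝ) < n := by exact_mod_cast ha.trans han
    have hstep : (1 : ℝ) / (n + 1) ≤ Real.log ((n + 1) / n) := by
      have h := Real.one_sub_inv_le_log_of_pos (show (0 : ℝ) < (n + 1) / n by positivity)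
      rwa [inv_div, one_sub_div (by positivity), add_sub_cancel_left] at h
    have hlog : Real.log (((n + 1 : ℕ) : ℝ) / a) = Real.log (n / a) + Real.log ((n + 1) / n) := by
      rw [← Real.log_mul (by positivity) (by positivity)]
      push_cast
      field_simp
    rw [sum_Ioc_succ_top han, hlog]
    push_cast
    linarith

lemma sum_Icc_div_max_le {x : ℝ} (hx : 0 ≤ x) {a b : ℕ} (ha : 1 ≤ a) (hab : a ≤ b) :
    ∑ t ∈ Icc 1 b, x / (max t a : ℕ) ≤ x * (1 + Real.log ((b : ℝ) / a)) := by
  have ha0 : (a : ℝ) ≠ 0 := by positivity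
  have hhead : ∑ t ∈ Ioc 0 a, x / (max t a : ℕ) = x := by
    rw [sum_congr rfl fun t ht => by rw [max_eq_right (mem_Ioc.mp ht).2], sum_const,
      Nat.card_Ioc, Nat.sub_zero, nsmul_eq_mul, mul_div_cancel₀ x ha0]
  have htail : ∑ t ∈ Ioc a b, x / (max t a : ℕ) = x * ∑ t ∈ Ioc a b, (1 : ℝ) / t := by
    rw [mul_sum]
    refine sum_congr rfl fun t ht => ?_
    rw [max_eq_left (mem_Ioc.mp ht).1.le, mul_one_div]
  have hIcc : Icc 1 b = Ioc 0 b := by ext; simp; omega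
  rw [hIcc, ← sum_Ioc_consecutive _ (Nat.zero_le a) hab, hhead, htail, mul_add, mul_one]
  gcongr
  exact sum_Ioc_one_div_le_log ha hab

lemma sum_Icc_ite_div_eq (x : ℝ) {p b : ℕ} (hp : p ≠ 0) (hpb : p ≤ b) :
    ∑ t ∈ Icc 1 b, (if t ≤ p then x / p else 0) = x := by
  have hfilter : (Icc 1 b).filter (· ≤ p) = Icc 1 p := by ext; simp; omega
  rw [← sum_filter, hfilter, sum_const, Nat.card_Icc, Nat.add_sub_cancel, nsmul_eq_mul,
    mul_div_cancel₀ x (by exact_mod_cast hp)]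

lemma div_le_div_max {x : ℝ} (hx : 0 ≤ x) {a t T : ℕ} (ha : 1 ≤ a) (htT : t ≤ T) (haT : a ≤ T) :
    x / T ≤ x / (max t a : ℕ) :=
  div_le_div_of_nonneg_left hx (by exact_mod_cast ha.trans (le_max_right t a))
    (by exact_mod_cast max_le htT haT)

lemma le_min_iInf_div_one {ι : Type*} [Nonempty ι] {c : ℝ} {f g : ι → ℝ} (hc : c ≤ 1)
    (hg : ∀ i, 0 < g i) (h : ∀ i, c * g i ≤ f i) : c ≤ min (⨅ i, f i / g i) 1 :=
  le_min (le_ciInf fun i => (le_div_iff₀ (hg i)).mpr (h i)) hc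

lemma le_one_div_mul_sum_Icc {c : ℝ} {f : ℕ → ℝ} {T : ℕ} (hT : 0 < T)
    (h : ∀ t ∈ Icc 1 T, c ≤ f t) : c ≤ 1 / (T : ℝ) * ∑ t ∈ Icc 1 T, f t := by
  have hsum := card_nsmul_le_sum _ _ _ h
  rw [Nat.card_Icc, Nat.add_sub_cancel, nsmul_eq_mul] at hsum
  rw [one_div_mul_eq_div, le_div_iff₀ (by exact_mod_cast hT), mul_comm]
  exact hsum

theorem stmt17_general (m : ℕ) (hm : 0 < m) (B : Fin m → ℝ) (hB : ∀ j, 0 < B j)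
    (τ₁ τ₂ TP : ℕ) (h1 : 1 ≤ τ₁) (hP1 : τ₁ ≤ TP) (hP2 : TP ≤ τ₂)
    (α : ℝ) (hα0 : 0 ≤ α) (hα1 : α ≤ 1) :
    let L := Real.log ((τ₂ : ℝ) / τ₁)
    let ρ : ℕ → Fin m → ℝ := fun t j => B j / t
    let lam : ℕ → Fin m → ℝ := fun t j =>
      α / (1 + L) * ρ (max t τ₁) j + (1 - α) * (if t ≤ TP then ρ TP j else 0)
    (∀ j, ∑ t ∈ Finset.Icc 1 τ₂, lam t j ≤ B j) ∧
    (∀ T, τ₁ ≤ T → T ≤ τ₂ →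
      (1 / (T : ℝ)) * ∑ t ∈ Finset.Icc 1 T, min (⨅ j, lam t j / ρ T j) 1
        ≥ α / (1 + L)) ∧
    (1 / (TP : ℝ)) * ∑ t ∈ Finset.Icc 1 TP, min (⨅ j, lam t j / ρ TP j) 1
        ≥ 1 - α + α / (1 + L) := by
  intro L ρ lam
  have : Nonempty (Fin m) := Fin.pos_iff_nonempty.mp hm
  have hτ : τ₁ ≤ τ₂ := hP1.trans hP2
  have hL : 0 ≤ L := Real.log_nonneg <| (one_le_div (by positivity)).mpr (by exact_mod_cast hτ)
  have hc0 : 0 ≤ α / (1 + L) := by positivity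
  have hcα : α / (1 + L) ≤ α := div_le_self hα0 (by linarith)
  have hρ : ∀ T, τ₁ ≤ T → ∀ j, 0 < ρ T j := fun T hT j =>
    div_pos (hB j) (by exact_mod_cast h1.trans hT)
  have hmax : ∀ T t, τ₁ ≤ T → t ≤ T → ∀ j,
      α / (1 + L) * ρ T j ≤ α / (1 + L) * ρ (max t τ₁) j := fun T t hT htT j =>
    mul_le_mul_of_nonneg_left (div_le_div_max (hB j).le h1 htT hT) hc0
  refine ⟨fun j => ?_, fun T hT _ => ?_, ?_⟩
  · calc ∑ t ∈ Icc 1 τ₂, lam t j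
          = α / (1 + L) * ∑ t ∈ Icc 1 τ₂, B j / (max t τ₁ : ℕ)
            + (1 - α) * ∑ t ∈ Icc 1 τ₂, (if t ≤ TP then B j / TP else 0) := by
          simp only [lam, ρ, sum_add_distrib, mul_sum]
      _ ≤ α / (1 + L) * (B j * (1 + L)) + (1 - α) * B j := by
          rw [sum_Icc_ite_div_eq _ (by omega) hP2]
          gcongr
          exact sum_Icc_div_max_le (hB j).le h1 hτ
      _ = B j := by field_simp; ring
  · refine le_one_div_mul_sum_Icc (by omega) fun t ht =>
      le_min_iInf_div_one (hcα.trans hα1) (hρ T hT) fun j =>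
        (hmax T t hT (mem_Icc.mp ht).2 j).trans ?_
    refine le_add_of_nonneg_right (mul_nonneg (by linarith) ?_)
    split_ifs
    exacts [(hρ TP hP1 j).le, le_rfl]
  · refine le_one_div_mul_sum_Icc (by omega) fun t ht =>
      le_min_iInf_div_one (by linarith) (hρ TP hP1) fun j => ?_
    have htP := (mem_Icc.mp ht).2
    simp only [lam, if_pos htP, add_mul]
    linarith [hmax TP t hP1 htP j]

/-- The simple prediction-based target sequence
`λ_t = α/(1+ln(τ₂/τ₁))·ρ_{max(t,τ₁)} + (1-α)·ρ_{T_P}·1{t ≤ T_P}` (with `ρ_t = B/t`)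
satisfies the budget constraint, is `α/(1+ln(τ₂/τ₁))`-competitive for every
`T ∈ [τ₁,τ₂]`, and is `(1-α+α/(1+ln(τ₂/τ₁)))`-consistent at `T = T_P`. -/
theorem stmt17 (m : ℕ) (hm : 0 < m) (B : Fin m → ℝ) (hB : ∀ j, 0 < B j)
    (τ₁ τ₂ TP : ℕ) (h1 : 1 ≤ τ₁) (h12 : τ₁ ≤ τ₂) (hP1 : τ₁ ≤ TP) (hP2 : TP ≤ τ₂)
    (α : ℝ) (hα0 : 0 ≤ α) (hα1 : α ≤ 1) :
    let L := Real.log ((τ₂ : ℝ) / τ₁)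
    let ρ : ℕ → Fin m → ℝ := fun t j => B j / t
    let lam : ℕ → Fin m → ℝ := fun t j =>
      α / (1 + L) * ρ (max t τ₁) j + (1 - α) * (if t ≤ TP then ρ TP j else 0)
    (∀ j, ∑ t ∈ Finset.Icc 1 τ₂, lam t j ≤ B j) ∧
    (∀ T, τ₁ ≤ T → T ≤ τ₂ →
      (1 / (T : ℝ)) * ∑ t ∈ Finset.Icc 1 T, min (⨅ j, lam t j / ρ T j) 1
        ≥ α / (1 + L)) ∧
    (1 / (TP : ℝ)) * ∑ t ∈ Finset.Icc 1 TP, min (⨅ j, lam t j / ρ TP j) 1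
        ≥ 1 - α + α / (1 + L) :=
  stmt17_general m hm B hB τ₁ τ₂ TP h1 hP1 hP2 α hα0 hα1
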